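/- arXiv:1511.00700 — 7 statements merged into one kernel-verified Lean document; each statement's English description precedes it below -/
import Mathlib

section
/- Let V ⊆ {1,...,p}^d be a set of vectors all of the same squared Euclidean norm, let k ≥ 2, q = (k+1)p, and let f(v) = Σ_i v_i q^{i-1}. Then the image A = f(V) ⊆ ℕ is k-average-free: for any a_1, ..., a_k ∈ A not all equal and any ā ∈ A, a_1 + ... + a_k ≠ k·ā. -/
/-!
Write `f v = ∑ i, v i * q ^ i`, `aⱼ = f vⱼ` and `ā = f w`. Since `f` is additive,
`a₁ + ⋯ + a_k = k * ā` says `f (v₁ + ⋯ + v_k) = f (k • w)`; every coordinate on either side is at most `k * p < q`, so no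
carries occur and base-`q` expansions are unique, giving `v₁ + ⋯ + v_k = k • w`. On a sphere this
forces `vⱼ = w` for all `j`, because `∑ⱼ ‖vⱼ - w‖² = ∑ⱼ ‖vⱼ‖² - 2⟪∑ⱼ vⱼ, w⟫ + k ‖w‖² = 0`.
-/

open Finset

theorem Nat.ofDigits_ofFn (b : ℕ) {n : ℕ} (u : Fin n → ℕ) :
    Nat.ofDigits b (List.ofFn u) = ∑ i, u i * b ^ (i : ℕ) := by
  induction n with
  | zero => simp
  | succ n ih =>
    rw [List.ofFn_succ, Nat.ofDigits_cons, ih, Fin.sum_univ_succ, mul_sum]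
    simp only [Fin.val_zero, pow_zero, mul_one, Fin.val_succ, pow_succ]
    congr 1
    exact sum_congr rfl fun i _ => by ring

theorem Nat.eq_of_sum_mul_pow_eq {b n : ℕ} (hb : 1 < b) {u u' : Fin n → ℕ}
    (hu : ∀ i, u i < b) (hu' : ∀ i, u' i < b)
    (h : ∑ i, u i * b ^ (i : ℕ) = ∑ i, u' i * b ^ (i : ℕ)) : u = u' :=
  List.ofFn_injective <| Nat.ofDigits_inj_of_len_eq hb (by simp)
    (by simpa [List.mem_ofFn] using hu) (by simpa [List.mem_ofFn] using hu')
    (by rwa [Nat.ofDigits_ofFn, Nat.ofDigits_ofFn])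

theorem eq_of_sum_eq_card_nsmul_of_sum_sq_eq {R ι κ : Type*} [CommRing R] [LinearOrder R]
    [IsStrictOrderedRing R] [Fintype ι] [Fintype κ] (v : κ → ι → R) (w : ι → R)
    (hnorm : ∀ j, ∑ i, v j i ^ 2 = ∑ i, w i ^ 2) (hsum : ∑ j, v j = Fintype.card κ • w) (j : κ) :
    v j = w := by
  have hsum' : ∀ i, ∑ j, v j i = Fintype.card κ * w i := fun i => by
    simpa [Finset.sum_apply, nsmul_eq_mul] using congrFun hsum i
  have hdist : ∑ j, ∑ i, (v j i - w i) ^ 2 = 0 := calc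
    ∑ j, ∑ i, (v j i - w i) ^ 2
        = ∑ j, ∑ i, v j i ^ 2 - 2 * ∑ i, (∑ j, v j i) * w i + Fintype.card κ * ∑ i, w i ^ 2 := by
      simp only [sub_sq, sum_add_distrib, sum_sub_distrib, sum_mul, mul_sum, sum_const, card_univ,
        nsmul_eq_mul]
      congr 2
      rw [sum_comm]
      simp only [mul_assoc]
    _ = 0 := by
      simp only [hnorm, hsum', sum_const, card_univ, nsmul_eq_mul, mul_assoc, ← sq,
        ← mul_sum]
      ring
  have hnonneg : ∀ j ∈ univ, 0 ≤ ∑ i, (v j i - w i) ^ 2 := fun j _ =>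
    sum_nonneg fun i _ => sq_nonneg _
  funext i
  have hj := (sum_eq_zero_iff_of_nonneg hnonneg).mp hdist j (mem_univ j)
  have hji := (sum_eq_zero_iff_of_nonneg fun i _ => sq_nonneg (v j i - w i)).mp hj i (mem_univ i)
  exact sub_eq_zero.mp (pow_eq_zero_iff two_ne_zero |>.mp hji)

theorem image_of_sphere_is_k_average_free_general (p k d : ℕ) (hp : 1 ≤ p) (hk : 2 ≤ k)
    (V : Finset (Fin d → ℕ)) (hV : ∀ v ∈ V, ∀ i, v i ∈ Finset.Icc 1 p)
    (r : ℕ) (hnorm : ∀ v ∈ V, ∑ i, (v i) ^ 2 = r) :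
    ∀ a : Fin k → ℕ,
      (∀ i, a i ∈ V.image (fun v => ∑ i : Fin d, v i * ((k + 1) * p) ^ (i : ℕ))) →
      (∃ i j, a i ≠ a j) →
      ∀ abar ∈ V.image (fun v => ∑ i : Fin d, v i * ((k + 1) * p) ^ (i : ℕ)),
        ∑ i, a i ≠ k * abar := by
  intro a ha hne abar habar heq
  set q := (k + 1) * p
  simp only [Finset.mem_image] at ha habar
  choose v hvV hva using ha
  obtain rfl : a = fun j => ∑ i, v j i * q ^ (i : ℕ) := funext fun j => (hva j).symm
  obtain ⟨w, hwV, rfl⟩ := habar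
  have hcoord_le : ∀ u ∈ V, ∀ i, u i ≤ p := fun u hu i => (Finset.mem_Icc.mp (hV u hu i)).2
  have hkp : k * p < q := Nat.mul_lt_mul_of_pos_right (Nat.lt_succ_self k) hp
  have hdigits : ∑ j, v j = k • w := by
    refine Nat.eq_of_sum_mul_pow_eq (b := q) (by nlinarith) (fun i => ?_) (fun i => ?_) ?_
    · calc (∑ j, v j) i = ∑ j, v j i := Finset.sum_apply i univ v
        _ ≤ ∑ _j : Fin k, p := sum_le_sum fun j _ => hcoord_le _ (hvV j) i
        _ < q := by simpa using hkp
    · simpa using (Nat.mul_le_mul_left k (hcoord_le w hwV i)).trans_lt hkp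
    · simp only [Finset.sum_apply, sum_mul, Pi.smul_apply, smul_eq_mul, mul_assoc, ← mul_sum]
      rw [sum_comm]
      exact heq
  have hall : ∀ j, v j = w := fun j => by
    have hcast := eq_of_sum_eq_card_nsmul_of_sum_sq_eq (R := ℤ) (fun j i => (v j i : ℤ))
      (fun i => (w i : ℤ)) (fun j => by exact_mod_cast (hnorm _ (hvV j)).trans (hnorm w hwV).symm)
      (funext fun i => by simpa [Finset.sum_apply] using congrArg (fun u => (u i : ℤ)) hdigits) j
    exact funext fun i => by exact_mod_cast congrFun hcast i
  obtain ⟨i, j, hij⟩ := hne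
  exact hij (by simp only [hall])

theorem image_of_sphere_is_k_average_free (p k d : ℕ) (hp : 1 ≤ p) (hk : 2 ≤ k) (hd : 1 ≤ d)
    (V : Finset (Fin d → ℕ)) (hV : ∀ v ∈ V, ∀ i, v i ∈ Finset.Icc 1 p)
    (r : ℕ) (hnorm : ∀ v ∈ V, ∑ i, (v i) ^ 2 = r) :
    ∀ a : Fin k → ℕ,
      (∀ i, a i ∈ V.image (fun v => ∑ i : Fin d, v i * ((k + 1) * p) ^ (i : ℕ))) →
      (∃ i j, a i ≠ a j) →
      ∀ abar ∈ V.image (fun v => ∑ i : Fin d, v i * ((k + 1) * p) ^ (i : ℕ)),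
        ∑ i, a i ≠ k * abar :=
  image_of_sphere_is_k_average_free_general p k d hp hk V hV r hnorm
end

section
/- For every ε > 0 there exists δ > 0 such that for infinitely many N there is a k-average-free set A ⊆ {1,...,N} with |A| ≥ c·N^{1-ε} and k ≥ N^δ (for some constant c > 0 depending on ε). -/
def KAvgFree (k : ℕ) (A : Finset ℕ) : Prop :=
  ∀ a : Fin k → ℕ, (∀ i, a i ∈ A) → (∃ i j, a i ≠ a j) → ∀ b ∈ A, ∑ i, a i ≠ k * b

/-!
Let `S` be the set of lattice points of `{0, …, p - 1}^d` on a sphere `‖x‖² = r`; for a suitable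
`r` it has at least `p^d / (d p²)` elements. If `k` points of `S` average to a point of `S`, then
they all coincide, since `∑ ‖vᵢ - w‖² = ∑ ‖vᵢ‖² - 2⟪∑ vᵢ, w⟫ + k ‖w‖² = 0`. Reading the points
as base-`(k + 1) p` expansions turns `S` into a set of integers below `((k + 1) p)^d`: sums of `k`
digits cause no carries, so an average relation between the integers is one between the points.
A shift by one moves the set into `[1, N]` with `N = ((k + 1) p)^d`.
With `p = k^d` and `d ≈ 5 / ε` the set has size `N^(1 - ε)` and `k ≥ N^(1 / (2 d²))`.
-/

open Finset

theorem eq_of_norm_eq_of_sum_eq_card_nsmul {E ι : Type*} [NormedAddCommGroup E]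
    [InnerProductSpace ℝ E] [Fintype ι] {v : ι → E} {w : E} (hv : ∀ i, ‖v i‖ = ‖w‖)
    (hsum : ∑ i, v i = Fintype.card ι • w) (i : ι) : v i = w := by
  have hzero : ∑ i, ‖v i - w‖ ^ 2 = 0 := by
    simp_rw [norm_sub_sq_real, hv, sum_add_distrib, sum_sub_distrib, ← mul_sum, ← sum_inner,
      hsum, ← Nat.cast_smul_eq_nsmul ℝ, real_inner_smul_left, real_inner_self_eq_norm_sq,
      sum_const, card_univ, nsmul_eq_mul]
    ring
  rw [sum_eq_zero_iff_of_nonneg fun _ _ => sq_nonneg _] at hzero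
  simpa [sub_eq_zero] using hzero i (mem_univ i)

namespace Behrend

theorem map_lt_pow {n B : ℕ} {x : Fin n → ℕ} (hx : ∀ i, x i < B) : map B x < B ^ n := by
  induction n with
  | zero => simp
  | succ n ih =>
    have htail := ih (x := x ∘ Fin.succ) fun i => hx _
    have hhead := hx 0
    rw [map_succ', pow_succ]
    nlinarith

theorem eq_of_mem_sphere_of_sum_eq_card_nsmul {ι : Type*} [Fintype ι] {n d r : ℕ}
    {v : ι → Fin n → ℕ} {w : Fin n → ℕ} (hv : ∀ i, v i ∈ sphere n d r) (hw : w ∈ sphere n d r)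
    (hsum : ∑ i, v i = Fintype.card ι • w) (i : ι) : v i = w := by
  let f : (Fin n → ℕ) →+ EuclideanSpace ℝ (Fin n) :=
    { toFun := fun x => WithLp.toLp 2 ((↑) ∘ x)
      map_zero' := PiLp.ext fun _ => Nat.cast_zero
      map_add' := fun _ _ => PiLp.ext fun _ => Nat.cast_add _ _ }
  have hf : Function.Injective f :=
    (WithLp.toLp_injective 2).comp Nat.cast_injective.comp_left
  refine hf (eq_of_norm_eq_of_sum_eq_card_nsmul (v := f ∘ v) (fun i => ?_) ?_ i)
  · exact (norm_of_mem_sphere (hv i)).trans (norm_of_mem_sphere hw).symm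
  · simp only [Function.comp_apply, ← map_sum, hsum, map_nsmul]

theorem kAvgFree_image_map_sphere {n d r k B : ℕ} (hB : k * d < B) :
    KAvgFree k ((sphere n d r).image (map B)) := by
  rintro a ha ⟨i, j, hij⟩ b hb hsum
  simp only [mem_image] at ha hb
  choose v hv hva using ha
  obtain rfl : a = fun i => map B (v i) := funext fun i => (hva i).symm
  obtain ⟨w, hw, rfl⟩ := hb
  have hlt : ∀ x ∈ sphere n d r, ∀ l, x l < d := fun x hx => mem_box.1 (sphere_subset_box hx)
  have hvw : ∑ i, v i = k • w := by
    refine map_injOn (d := B) (fun l => ?_) (fun l => ?_) ?_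
    · calc (∑ i, v i) l = ∑ i, v i l := sum_apply _ _ _
        _ ≤ ∑ _i : Fin k, d := sum_le_sum fun i _ => (hlt _ (hv i) l).le
        _ = k * d := by simp
        _ < B := hB
    · calc (k • w) l = k * w l := rfl
        _ ≤ k * d := Nat.mul_le_mul_left _ (hlt _ hw l).le
        _ < B := hB
    · rw [map_sum, map_nsmul, smul_eq_mul]; exact hsum
  have heq := eq_of_mem_sphere_of_sum_eq_card_nsmul hv hw (by simpa using hvw)
  exact hij (by simp only [heq])

end Behrend

theorem KAvgFree.map_addRightEmbedding {k : ℕ} {A : Finset ℕ} (hA : KAvgFree k A) (c : ℕ) :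
    KAvgFree k (A.map (addRightEmbedding c)) := by
  rintro a ha ⟨i, j, hij⟩ b hb hsum
  simp only [mem_map, addRightEmbedding_apply] at ha hb
  choose a' ha' ha'a using ha
  obtain rfl : a = fun i => a' i + c := funext fun i => (ha'a i).symm
  obtain ⟨b', hb', rfl⟩ := hb
  refine hA a' ha' ⟨i, j, fun h => hij (by simp only [h])⟩ b' hb' ?_
  simp only [sum_add_distrib, sum_const, card_univ, Fintype.card_fin, smul_eq_mul] at hsum
  linarith

theorem exists_kAvgFree_subset_Icc (k : ℕ) {d p : ℕ} (hd : 0 < d) (hp : 0 < p) :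
    ∃ A ⊆ Icc 1 (((k + 1) * p) ^ d), KAvgFree k A ∧ p ^ d ≤ #A * (d * p ^ 2) := by
  set B := (k + 1) * p
  obtain ⟨r, hr⟩ := Behrend.exists_large_sphere d p
  have hbox : ∀ x ∈ Behrend.sphere d p r, ∀ i, x i < B := fun x hx i =>
    (Behrend.mem_box.1 (Behrend.sphere_subset_box hx) i).trans_le
      (Nat.le_mul_of_pos_left p k.succ_pos)
  refine ⟨((Behrend.sphere d p r).image (Behrend.map B)).map (addRightEmbedding 1), ?_,
    (Behrend.kAvgFree_image_map_sphere (by simp only [B]; nlinarith)).map_addRightEmbedding 1, ?_⟩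
  · intro y hy
    simp only [mem_map, mem_image, addRightEmbedding_apply] at hy
    obtain ⟨_, ⟨x, hx, rfl⟩, rfl⟩ := hy
    have := Behrend.map_lt_pow (hbox x hx)
    rw [mem_Icc]
    omega
  · rw [card_map, card_image_of_injOn (Behrend.map_injOn.mono hbox)]
    rw [div_le_iff₀ (by positivity)] at hr
    exact_mod_cast hr

theorem rpow_le_rpow_of_le_pow {x m t s : ℝ} {a : ℕ} (hx : 0 ≤ x) (hm : 1 ≤ m) (h : x ≤ m ^ a)
    (ht : 0 ≤ t) (hs : a * t ≤ s) : x ^ t ≤ m ^ s :=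
  calc x ^ t ≤ (m ^ (a : ℝ)) ^ t := by
        rw [Real.rpow_natCast]; exact Real.rpow_le_rpow hx h ht
    _ = m ^ (a * t : ℝ) := (Real.rpow_mul (by linarith) _ _).symm
    _ ≤ m ^ s := Real.rpow_le_rpow_of_exponent_le hm hs

theorem rpow_le_of_le_pow_of_pow_le_mul_pow {N m C a b c : ℕ} {t : ℝ} (hm : 1 ≤ m)
    (hN : N ≤ m ^ a) (hC : m ^ b ≤ C * m ^ c) (ht : 0 ≤ t) (hexp : a * t ≤ (b : ℝ) - c) :
    (N : ℝ) ^ t ≤ C :=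
  calc (N : ℝ) ^ t ≤ (m : ℝ) ^ ((b : ℝ) - c) :=
        rpow_le_rpow_of_le_pow (by positivity) (by exact_mod_cast hm) (by exact_mod_cast hN) ht
          hexp
    _ = (m : ℝ) ^ b / (m : ℝ) ^ c := by
        rw [Real.rpow_sub (by positivity), Real.rpow_natCast, Real.rpow_natCast]
    _ ≤ C := by
        rw [div_le_iff₀ (by positivity)]
        exact_mod_cast hC

theorem exists_kAvgFree_subset_Icc_of_le {d m : ℕ} (hd : 0 < d) (hdm : d ≤ m) (hm : 2 ≤ m) :
    ∃ N, m ≤ N ∧ N ≤ m ^ (d * (d + 2)) ∧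
      ∃ A ⊆ Icc 1 N, KAvgFree m A ∧ m ^ (d * d) ≤ #A * m ^ (2 * d + 1) := by
  obtain ⟨A, hAN, hA, hcard⟩ := exists_kAvgFree_subset_Icc m hd (by positivity : 0 < m ^ d)
  refine ⟨_, ?_, ?_, A, hAN, hA, ?_⟩
  · calc m ≤ m ^ d := Nat.le_self_pow hd.ne' m
      _ ≤ (m + 1) * m ^ d := Nat.le_mul_of_pos_left _ m.succ_pos
      _ ≤ ((m + 1) * m ^ d) ^ d := Nat.le_self_pow hd.ne' _
  · rw [mul_comm d, pow_mul]
    refine Nat.pow_le_pow_left ?_ d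
    rw [pow_add, mul_comm]
    exact Nat.mul_le_mul_left _ (by nlinarith)
  · rw [pow_mul]
    refine hcard.trans (Nat.mul_le_mul_left _ ?_)
    calc d * (m ^ d) ^ 2 ≤ m * (m ^ d) ^ 2 := Nat.mul_le_mul_right _ hdm
      _ = m ^ (2 * d + 1) := by ring

theorem behrend_type_k_average_free_sets :
    ∀ ε : ℝ, 0 < ε → ∃ δ : ℝ, 0 < δ ∧ ∃ c : ℝ, 0 < c ∧
      ∀ n : ℕ, ∃ N k : ℕ, n ≤ N ∧ ∃ A : Finset ℕ, A ⊆ Finset.Icc 1 N ∧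
        KAvgFree k A ∧ c * (N : ℝ) ^ ((1 : ℝ) - ε) ≤ (A.card : ℝ) ∧
        (N : ℝ) ^ δ ≤ (k : ℝ) := by
  intro ε hε
  -- `ε' ≤ 1` keeps the exponent `1 - ε'` nonnegative, so that `N ≤ m ^ _` can be raised to it.
  set ε' := min ε 1
  obtain ⟨d, hd⟩ := exists_nat_ge (5 / ε')
  have hεd : 5 ≤ ε' * d := by rwa [div_le_iff₀ (lt_min hε one_pos), mul_comm] at hd
  have hd5 : (5 : ℝ) ≤ d := by nlinarith [min_le_right ε 1]
  refine ⟨1 / (2 * d ^ 2), by positivity, 1, one_pos, fun n => ?_⟩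
  set m := max n (max d 2)
  have hm2 : 2 ≤ m := le_max_of_le_right (le_max_right _ _)
  obtain ⟨N, hmN, hN, A, hAN, hA, hcard⟩ := exists_kAvgFree_subset_Icc_of_le
    (by exact_mod_cast (by linarith : (0 : ℝ) < d)) (le_max_of_le_right (le_max_left _ _)) hm2
  have hN1 : (1 : ℝ) ≤ N := by exact_mod_cast (hm2.trans hmN).trans' one_le_two
  refine ⟨N, m, (le_max_left _ _).trans hmN, A, hAN, hA, ?_, ?_⟩
  · calc 1 * (N : ℝ) ^ (1 - ε) ≤ (N : ℝ) ^ (1 - ε') := by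
          rw [one_mul]; exact Real.rpow_le_rpow_of_exponent_le hN1 (by linarith [min_le_left ε 1])
      _ ≤ #A := by
          refine rpow_le_of_le_pow_of_pow_le_mul_pow (by omega) hN hcard
            (by linarith [min_le_right ε 1]) ?_
          push_cast
          nlinarith [mul_le_mul_of_nonneg_right hεd (by positivity : (0 : ℝ) ≤ d + 2)]
  · refine (rpow_le_rpow_of_le_pow (by positivity) (by exact_mod_cast hm2.trans' one_le_two)
      (by exact_mod_cast hN) (by positivity) ?_).trans_eq (Real.rpow_one _)
    rw [mul_one_div, div_le_one (by positivity)]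
    push_cast
    nlinarith
end

section
/- Let A ⊆ {1,...,N} be a k-average-free set. Construct a layered graph G with vertex set {(x, j) : x ∈ {1,...,(k+1)N}, j ∈ {0,...,k}} and an edge between (x, j) and (y, j+1) whenever y - x ∈ A. Then for every x ∈ {1,...,N} and a ∈ A, the path (x,0), (x+a,1), (x+2a,2), ..., (x+ka,k) is the unique shortest path between (x,0) and (x+k·a, k), and it has length exactly k. -/
def layeredGraph (N k : ℕ) (A : Finset ℕ) : SimpleGraph (ℕ × ℕ) :=
  SimpleGraph.fromRel (fun u v =>
    u.2 + 1 = v.2 ∧ v.2 ≤ k ∧ 1 ≤ u.1 ∧ v.1 ≤ (k + 1) * N ∧ ∃ a ∈ A, v.1 = u.1 + a)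

theorem KAvgFree.eq_replicate {k : ℕ} {A : Finset ℕ} (hfree : KAvgFree k A) {l : List ℕ}
    (hlen : l.length = k) (hl : ∀ b ∈ l, b ∈ A) {a : ℕ} (ha : a ∈ A) (hsum : l.sum = k * a) :
    l = List.replicate k a := by
  subst hlen
  have hconst : ∀ (i j : Fin l.length), l[(i : ℕ)] = l[(j : ℕ)] := by
    by_contra! hne
    exact hfree (fun i => l[(i : ℕ)]) (fun i => hl _ (List.getElem_mem _)) hne a ha
      (by rw [Fin.sum_univ_getElem, hsum])
  refine List.eq_replicate_iff.mpr ⟨rfl, fun c hc => ?_⟩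
  obtain ⟨i, hi, rfl⟩ := List.getElem_of_mem hc
  have hrep : l = List.replicate l.length l[i] :=
    List.eq_replicate_iff.mpr ⟨rfl, fun d hd => by
      obtain ⟨j, hj, rfl⟩ := List.getElem_of_mem hd
      exact hconst ⟨j, hj⟩ ⟨i, hi⟩⟩
  have hsum' : l.sum = l.length * l[i] := by
    conv_lhs => rw [hrep]
    rw [List.sum_replicate, smul_eq_mul]
  exact Nat.eq_of_mul_eq_mul_left (by omega) (hsum'.symm.trans hsum)

namespace layeredGraph

variable {N k : ℕ} {A : Finset ℕ}

theorem adj_cases {u v : ℕ × ℕ} (h : (layeredGraph N k A).Adj u v) :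
    (u.2 + 1 = v.2 ∧ ∃ b ∈ A, v.1 = u.1 + b) ∨ (v.2 + 1 = u.2 ∧ ∃ b ∈ A, u.1 = v.1 + b) := by
  rw [layeredGraph, SimpleGraph.fromRel_adj] at h
  rcases h.2 with ⟨hup, -, -, -, hb⟩ | ⟨hdown, -, -, -, hb⟩
  exacts [Or.inl ⟨hup, hb⟩, Or.inr ⟨hdown, hb⟩]

theorem adj_add {y j b : ℕ} (hb : b ∈ A) (hy : 1 ≤ y) (hyb : y + b ≤ (k + 1) * N)
    (hj : j + 1 ≤ k) : (layeredGraph N k A).Adj (y, j) (y + b, j + 1) := by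
  rw [layeredGraph, SimpleGraph.fromRel_adj]
  exact ⟨by simp, Or.inl ⟨rfl, hj, hy, hyb, b, hb, rfl⟩⟩

theorem snd_le_add_length {u v : ℕ × ℕ} (w : (layeredGraph N k A).Walk u v) :
    v.2 ≤ u.2 + w.length := by
  induction w with
  | nil => simp
  | cons h p ih =>
    rw [SimpleGraph.Walk.length_cons]
    rcases adj_cases h with ⟨h, -⟩ | ⟨h, -⟩ <;> omega

theorem exists_increments_of_snd_eq {u v : ℕ × ℕ} (w : (layeredGraph N k A).Walk u v)
    (hw : v.2 = u.2 + w.length) :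
    ∃ l : List ℕ, l.length = w.length ∧ (∀ b ∈ l, b ∈ A) ∧ v.1 = u.1 + l.sum ∧
      w.support = (List.range (w.length + 1)).map (fun j => (u.1 + (l.take j).sum, u.2 + j)) := by
  induction w with
  | nil => exact ⟨[], rfl, by simp, by simp, by simp⟩
  | @cons u u' v h p ih =>
    rw [SimpleGraph.Walk.length_cons] at hw ⊢
    have hp := snd_le_add_length p
    rcases adj_cases h with ⟨hup, b, hb, hu'⟩ | ⟨hdown, -⟩
    · obtain ⟨l, hlen, hlA, hv, hsupp⟩ := ih (by omega)
      refine ⟨b :: l, by simp [hlen], ?_, by simp [hv, hu', add_assoc], ?_⟩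
      · simpa [hb] using hlA
      · rw [SimpleGraph.Walk.support_cons, hsupp]
        conv_rhs => rw [List.range_succ_eq_map, List.map_cons, List.map_map]
        congr 1
        refine List.map_congr_left fun j _ => ?_
        simp only [Function.comp_apply, List.take_succ_cons, List.sum_cons, hu', ← hup]
        ext <;> simp only <;> omega
    · omega

theorem exists_walk_progression {x a : ℕ} (ha : a ∈ A) (hx : 1 ≤ x)
    (hxa : x + k * a ≤ (k + 1) * N) :
    ∀ m ≤ k, ∃ w : (layeredGraph N k A).Walk (x, 0) (x + m * a, m), w.length = m
  | 0, _ => ⟨SimpleGraph.Walk.nil.copy rfl (by simp), by simp⟩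
  | m + 1, hm => by
    obtain ⟨w, hw⟩ := exists_walk_progression ha hx hxa m (by omega)
    have hstep : x + m * a + a ≤ (k + 1) * N :=
      le_trans (by nlinarith) hxa
    have hadj := adj_add (N := N) ha (by omega) hstep (by omega)
    exact ⟨(w.concat hadj).copy rfl (by rw [add_assoc, add_one_mul]), by simp [hw]⟩

end layeredGraph

open layeredGraph in
theorem unique_shortest_path_in_layered_graph_general (N k : ℕ)
    (A : Finset ℕ) (hA : A ⊆ Finset.Icc 1 N) (hfree : KAvgFree k A)
    (x a : ℕ) (hx : x ∈ Finset.Icc 1 N) (ha : a ∈ A) :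
    (layeredGraph N k A).dist (x, 0) (x + k * a, k) = k ∧
    ∀ w : (layeredGraph N k A).Walk (x, 0) (x + k * a, k), w.length = k →
      w.support = (List.range (k + 1)).map (fun j => (x + j * a, j)) := by
  obtain ⟨hx₁, hxN⟩ := Finset.mem_Icc.mp hx
  have haN := (Finset.mem_Icc.mp (hA ha)).2
  obtain ⟨w₀, hw₀⟩ := exists_walk_progression (N := N) ha hx₁ (by nlinarith) k le_rfl
  refine ⟨le_antisymm ((SimpleGraph.dist_le w₀).trans hw₀.le) ?_, fun w hw => ?_⟩
  · obtain ⟨w, hw⟩ := SimpleGraph.Reachable.exists_walk_length_eq_dist ⟨w₀⟩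
    simpa [hw] using snd_le_add_length w
  · obtain ⟨l, hlen, hlA, hsum, hsupp⟩ := exists_increments_of_snd_eq w (by simp [hw])
    have hl := hfree.eq_replicate (hlen.trans hw) hlA ha (by simpa using hsum.symm)
    rw [hsupp, hw, hl]
    refine List.map_congr_left fun j hj => ?_
    rw [List.take_replicate, List.sum_replicate, smul_eq_mul,
      min_eq_left (Nat.lt_succ_iff.mp (List.mem_range.mp hj)), zero_add]

theorem unique_shortest_path_in_layered_graph (N k : ℕ) (hk : 1 ≤ k)
    (A : Finset ℕ) (hA : A ⊆ Finset.Icc 1 N) (hfree : KAvgFree k A)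
    (x a : ℕ) (hx : x ∈ Finset.Icc 1 N) (ha : a ∈ A) :
    (layeredGraph N k A).dist (x, 0) (x + k * a, k) = k ∧
    ∀ w : (layeredGraph N k A).Walk (x, 0) (x + k * a, k), w.length = k →
      w.support = (List.range (k + 1)).map (fun j => (x + j * a, j)) :=
  unique_shortest_path_in_layered_graph_general N k A hA hfree x a hx ha
end

section
/- Let G be a graph and P a set of vertex pairs such that each pair in P has a unique shortest path in G and these shortest paths are pairwise edge-disjoint. Let G' be the bipartite-product graph with vertices (u₁,u₂,i) for u₁,u₂ ∈ V(G), i ∈ {1,2}, and edges {(u₁,u₂,1),(u₁',u₂,2)} when (u₁,u₁') is a forward edge of some pair's shortest path, and {(u₁,u₂,2),(u₁,u₂',1)} when (u₂,u₂') is a forward edge. Then for any two ordered pairs (s₁,t₁),(s₂,t₂) ∈ P both at distance Δ in G, the distance in G' from (s₁,s₂,1) to (t₁,t₂,1) is exactly 2Δ. -/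
/-- The bipartite-product graph `G'` on vertices `(u₁, u₂, i)`: an edge
`{(u₁,u₂,0), (u₁',u₂,1)}` whenever `(u₁,u₁')` is a forward step (a dart) of some pair's
designated shortest path, and an edge `{(u₁,u₂,1), (u₁,u₂',0)}` whenever `(u₂,u₂')` is such
a forward step.  (Index `0` plays the role of "1" and index `1` of "2" in the paper.) -/
def productGraph {V : Type*} (G : SimpleGraph V) (P : Set (V × V))
    (ρ : ∀ p : V × V, G.Walk p.1 p.2) : SimpleGraph (V × V × Fin 2) :=
  SimpleGraph.fromRel (fun a b =>
    (a.2.2 = 0 ∧ b.2.2 = 1 ∧ a.2.1 = b.2.1 ∧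
      ∃ p ∈ P, ∃ dart ∈ (ρ p).darts, dart.toProd = (a.1, b.1)) ∨
    (a.2.2 = 1 ∧ b.2.2 = 0 ∧ a.1 = b.1 ∧
      ∃ p ∈ P, ∃ dart ∈ (ρ p).darts, dart.toProd = (a.2.1, b.2.1)))

/-!
A walk in `G'` moves one coordinate at a time, so forgetting the layer index is a graph
homomorphism into the box product `G □ G`, where distances add up: this gives `2Δ` as a lower
bound. Conversely, alternating the steps of the two designated shortest paths is a walk in `G'`
of length `Δ + Δ` that returns to layer `0`.
-/

open SimpleGraph

theorem SimpleGraph.edist_map_le {V W : Type*} {G : SimpleGraph V} {H : SimpleGraph W}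
    (f : G →g H) (u v : V) : H.edist (f u) (f v) ≤ G.edist u v := by
  by_cases h : G.edist u v = ⊤
  · exact h ▸ le_top
  · obtain ⟨w, hw⟩ := exists_walk_of_edist_ne_top h
    rw [← hw, ← Walk.length_map f w]
    exact edist_le _

namespace productGraph

variable {V : Type*} {G : SimpleGraph V} {P : Set (V × V)} {ρ : ∀ p : V × V, G.Walk p.1 p.2}

theorem adj_left {p : V × V} (hp : p ∈ P) {d : G.Dart} (hd : d ∈ (ρ p).darts)
    (y : V) : (productGraph G P ρ).Adj (d.fst, y, 0) (d.snd, y, 1) :=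
  ⟨by simp [Prod.ext_iff], Or.inl (Or.inl ⟨rfl, rfl, rfl, p, hp, d, hd, rfl⟩)⟩

theorem adj_right {q : V × V} (hq : q ∈ P) {d : G.Dart} (hd : d ∈ (ρ q).darts)
    (x : V) : (productGraph G P ρ).Adj (x, d.fst, 1) (x, d.snd, 0) :=
  ⟨by simp [Prod.ext_iff], Or.inl (Or.inr ⟨rfl, rfl, rfl, q, hq, d, hd, rfl⟩)⟩

def toBoxProd : productGraph G P ρ →g G □ G where
  toFun a := (a.1, a.2.1)
  map_rel' {a b} h := by
    rw [boxProd_adj]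
    rcases h.2 with (⟨-, -, he, -, -, d, -, hd⟩ | ⟨-, -, he, -, -, d, -, hd⟩) |
        (⟨-, -, he, -, -, d, -, hd⟩ | ⟨-, -, he, -, -, d, -, hd⟩)
    · exact Or.inl ⟨by simpa [hd] using d.adj, he⟩
    · exact Or.inr ⟨by simpa [hd] using d.adj, he⟩
    · exact Or.inl ⟨by simpa [hd] using d.adj.symm, he.symm⟩
    · exact Or.inr ⟨by simpa [hd] using d.adj.symm, he.symm⟩

theorem edist_add_edist_le (a b c d : V) (i j : Fin 2) :
    G.edist a c + G.edist b d ≤ (productGraph G P ρ).edist (a, b, i) (c, d, j) := by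
  have h := edist_map_le (toBoxProd (P := P) (ρ := ρ)) (a, b, i) (c, d, j)
  rw [edist_boxProd] at h
  exact h

theorem exists_walk_interleave {p q : V × V} (hp : p ∈ P) (hq : q ∈ P)
    {a b c d : V} (w₁ : G.Walk a c) (w₂ : G.Walk b d) (hlen : w₁.length = w₂.length)
    (hw₁ : w₁.darts ⊆ (ρ p).darts) (hw₂ : w₂.darts ⊆ (ρ q).darts) :
    ∃ W : (productGraph G P ρ).Walk (a, b, 0) (c, d, 0), W.length = w₁.length + w₂.length := by
  induction w₁ generalizing b with
  | nil =>
    obtain rfl := Walk.eq_of_length_eq_zero hlen.symm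
    exact ⟨.nil, by simp [← hlen]⟩
  | cons h₁ t₁ ih =>
    cases w₂ with
    | nil => simp at hlen
    | cons h₂ t₂ =>
      simp only [Walk.darts_cons, List.cons_subset] at hw₁ hw₂
      obtain ⟨W, hW⟩ := ih t₂ (by simpa using hlen) hw₁.2 hw₂.2
      refine ⟨.cons (adj_left hp hw₁.1 _) (.cons (adj_right hq hw₂.1 _) W), ?_⟩
      simp only [Walk.length_cons, hW]
      omega

end productGraph

theorem product_graph_dist_general {V : Type*} (G : SimpleGraph V) (P : Set (V × V)) (Δ : ℕ)
    (ρ : ∀ p : V × V, G.Walk p.1 p.2)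
    (hlen : ∀ p ∈ P, (ρ p).length = Δ)
    (hdist : ∀ p ∈ P, G.dist p.1 p.2 = Δ) :
    ∀ p ∈ P, ∀ q ∈ P,
      (productGraph G P ρ).dist (p.1, q.1, 0) (p.2, q.2, 0) = 2 * Δ := by
  intro p hp q hq
  obtain ⟨W, hW⟩ := productGraph.exists_walk_interleave hp hq (ρ p) (ρ q)
    ((hlen p hp).trans (hlen q hq).symm) (List.Subset.refl _) (List.Subset.refl _)
  have hreach : (productGraph G P ρ).Reachable (p.1, q.1, 0) (p.2, q.2, 0) := ⟨W⟩
  have hupper := dist_le W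
  rw [hW, hlen p hp, hlen q hq] at hupper
  have hlower := productGraph.edist_add_edist_le (P := P) (ρ := ρ) p.1 q.1 p.2 q.2 0 0
  rw [← Reachable.coe_dist_eq_edist ⟨ρ p⟩, ← Reachable.coe_dist_eq_edist ⟨ρ q⟩,
    ← hreach.coe_dist_eq_edist, hdist p hp, hdist q hq] at hlower
  have hlower' : Δ + Δ ≤ (productGraph G P ρ).dist (p.1, q.1, 0) (p.2, q.2, 0) := by
    exact_mod_cast hlower
  omega

theorem product_graph_dist {V : Type*} (G : SimpleGraph V) (P : Set (V × V)) (Δ : ℕ)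
    (hΔ : 1 ≤ Δ) (ρ : ∀ p : V × V, G.Walk p.1 p.2)
    (hpath : ∀ p ∈ P, (ρ p).IsPath)
    (hlen : ∀ p ∈ P, (ρ p).length = Δ)
    (hdist : ∀ p ∈ P, G.dist p.1 p.2 = Δ)
    (huniq : ∀ p ∈ P, ∀ w : G.Walk p.1 p.2, w.length = Δ → w = ρ p)
    (hdisj : ∀ p ∈ P, ∀ q ∈ P, p ≠ q → ∀ e ∈ (ρ p).edges, e ∉ (ρ q).edges) :
    ∀ p ∈ P, ∀ q ∈ P,
      (productGraph G P ρ).dist (p.1, q.1, 0) (p.2, q.2, 0) = 2 * Δ :=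
  product_graph_dist_general G P Δ ρ hlen hdist
end

section
/- In the product construction G' of the previous statement, the alternating path ρ—which alternately advances the first coordinate along the unique shortest (s₁,t₁)-path in G and the second coordinate along the unique shortest (s₂,t₂)-path—is the unique shortest path in G' between (s₁,s₂,1) and (t₁,t₂,1). -/
namespace SimpleGraph.Walk

theorem IsTrail.symm_notMem_darts {V : Type*} {G : SimpleGraph V} {u v : V} {w : G.Walk u v}
    (hw : w.IsTrail) {d : G.Dart} (hd : d ∈ w.darts) : d.symm ∉ w.darts := fun hd' =>
  d.symm_ne (List.inj_on_of_nodup_map hw.edges_nodup hd' hd d.edge_symm)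

variable {W V : Type*} {H : SimpleGraph W} {G : SimpleGraph V} (f : W → V)
  (hf : ∀ ⦃x y⦄, H.Adj x y → f x ≠ f y → G.Adj (f x) (f y))

open Classical in
noncomputable def project : ∀ {x y : W}, H.Walk x y → G.Walk (f x) (f y)
  | _, _, nil => nil
  | x, _, cons (v := z) h w =>
    if hxz : f x = f z then (project w).copy hxz.symm rfl else cons (hf h hxz) (project w)

variable {f hf}

theorem support_project_cons [DecidableEq V] {x z y : W} (h : H.Adj x z) (w : H.Walk z y) :
    ((cons h w).project f hf).support =
      if f x = f z then (w.project f hf).support else f x :: (w.project f hf).support := by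
  by_cases hxz : f x = f z <;> simp [project, hxz]

theorem length_project [DecidableEq V] {x y : W} (w : H.Walk x y) :
    (w.project f hf).length = w.darts.countP (fun d => decide (f d.fst ≠ f d.snd)) := by
  induction w with
  | nil => rfl
  | @cons x z _ h w ih => by_cases hxz : f x = f z <;> simp [project, hxz, ih]

theorem mk_mem_darts_project {x y : W} {w : H.Walk x y} {d : H.Dart} (hd : d ∈ w.darts)
    (hne : f d.fst ≠ f d.snd) : ⟨(f d.fst, f d.snd), hf d.adj hne⟩ ∈ (w.project f hf).darts := by
  induction w with
  | nil => simp at hd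
  | @cons x z _ h w ih =>
    rw [darts_cons, List.mem_cons] at hd
    by_cases hxz : f x = f z
    · rcases hd with rfl | hd
      · exact absurd hxz hne
      · simpa [project, hxz] using ih hd
    · rcases hd with rfl | hd <;> simp_all [project]

end SimpleGraph.Walk

namespace productGraph

open SimpleGraph

variable {V : Type*} {G : SimpleGraph V} {P : Set (V × V)} {ρ : ∀ p : V × V, G.Walk p.1 p.2}

variable (P ρ) in
def IsPairDart (u v : V) : Prop := ∃ p ∈ P, ∃ d ∈ (ρ p).darts, d.toProd = (u, v)

variable (P ρ) in
def IsForwardStep (x y : V × V × Fin 2) : Prop :=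
  (x.2.2 = 0 ∧ y.2.2 = 1 ∧ x.2.1 = y.2.1 ∧ IsPairDart P ρ x.1 y.1) ∨
    (x.2.2 = 1 ∧ y.2.2 = 0 ∧ x.1 = y.1 ∧ IsPairDart P ρ x.2.1 y.2.1)

theorem adj_iff {x y : V × V × Fin 2} :
    (productGraph G P ρ).Adj x y ↔ x ≠ y ∧ (IsForwardStep P ρ x y ∨ IsForwardStep P ρ y x) :=
  fromRel_adj _ _ _

theorem IsPairDart.adj {u v : V} : IsPairDart P ρ u v → G.Adj u v := by
  rintro ⟨p, -, d, -, hd⟩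
  simpa [hd] using d.adj

theorem IsPairDart.not_symm (hP : ∀ p ∈ P, (ρ p).IsTrail)
    (hdisj : ∀ p ∈ P, ∀ q ∈ P, p ≠ q → ∀ e ∈ (ρ p).edges, e ∉ (ρ q).edges) {u v : V} :
    IsPairDart P ρ u v → ¬IsPairDart P ρ v u := by
  rintro ⟨p, hp, d, hd, huv⟩ ⟨q, hq, d', hd', hvu⟩
  have hd'_eq : d' = d.symm := Dart.ext _ _ (by rw [hvu, Dart.symm_toProd, huv]; rfl)
  by_cases hpq : p = q
  · subst hpq
    exact (hP p hp).symm_notMem_darts hd (hd'_eq ▸ hd')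
  · exact hdisj p hp q hq hpq d.edge (List.mem_map_of_mem hd)
      (d.edge_symm ▸ hd'_eq ▸ List.mem_map_of_mem hd')

theorem IsForwardStep.adj {x y : V × V × Fin 2} (h : IsForwardStep P ρ x y) :
    (productGraph G P ρ).Adj x y := by
  refine adj_iff.2 ⟨fun hxy => ?_, Or.inl h⟩
  subst hxy
  rcases h with ⟨h0, h1, -⟩ | ⟨h1, h0, -⟩ <;> simp_all

theorem adj_cases {x y : V × V × Fin 2} (h : (productGraph G P ρ).Adj x y) :
    (G.Adj x.1 y.1 ∧ x.2.1 = y.2.1) ∨ (x.1 = y.1 ∧ G.Adj x.2.1 y.2.1) := by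
  rcases (adj_iff.1 h).2 with (⟨-, -, h2, hd⟩ | ⟨-, -, h1, hd⟩) | (⟨-, -, h2, hd⟩ | ⟨-, -, h1, hd⟩)
  · exact Or.inl ⟨hd.adj, h2⟩
  · exact Or.inr ⟨h1, hd.adj⟩
  · exact Or.inl ⟨hd.adj.symm, h2.symm⟩
  · exact Or.inr ⟨h1.symm, hd.adj.symm⟩

theorem adj_fst_of_ne {x y : V × V × Fin 2} (h : (productGraph G P ρ).Adj x y)
    (hne : x.1 ≠ y.1) : G.Adj x.1 y.1 :=
  ((adj_cases h).resolve_right fun h' => hne h'.1).1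

theorem adj_snd_of_ne {x y : V × V × Fin 2} (h : (productGraph G P ρ).Adj x y)
    (hne : x.2.1 ≠ y.2.1) : G.Adj x.2.1 y.2.1 :=
  ((adj_cases h).resolve_left fun h' => hne h'.2).2

noncomputable abbrev projFst {x y : V × V × Fin 2} (w : (productGraph G P ρ).Walk x y) :
    G.Walk x.1 y.1 :=
  w.project Prod.fst fun _ _ => adj_fst_of_ne

noncomputable abbrev projSnd {x y : V × V × Fin 2} (w : (productGraph G P ρ).Walk x y) :
    G.Walk x.2.1 y.2.1 :=
  w.project (fun x => x.2.1) fun _ _ => adj_snd_of_ne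

theorem length_projFst_add_length_projSnd {x y : V × V × Fin 2}
    (w : (productGraph G P ρ).Walk x y) : (projFst w).length + (projSnd w).length = w.length := by
  classical
  rw [Walk.length_project, Walk.length_project, ← Walk.length_darts,
    List.length_eq_countP_add_countP (fun d => decide (d.fst.1 ≠ d.snd.1))]
  congr 1
  refine List.countP_congr fun d _ => ?_
  rcases adj_cases d.adj with ⟨h1, h2⟩ | ⟨h1, h2⟩
  · simp [h1.ne, h2]
  · simp [h1, h2.ne]

theorem isForwardStep_of_mem_darts (hP : ∀ p ∈ P, (ρ p).IsTrail)
    (hdisj : ∀ p ∈ P, ∀ q ∈ P, p ≠ q → ∀ e ∈ (ρ p).edges, e ∉ (ρ q).edges)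
    {x y : V × V × Fin 2} {w : (productGraph G P ρ).Walk x y}
    (h₁ : ∀ d ∈ (projFst w).darts, IsPairDart P ρ d.fst d.snd)
    (h₂ : ∀ d ∈ (projSnd w).darts, IsPairDart P ρ d.fst d.snd) :
    ∀ d ∈ w.darts, IsForwardStep P ρ d.fst d.snd := by
  intro d hd
  refine (adj_iff.1 d.adj).2.resolve_right ?_
  rintro (⟨-, -, -, hback⟩ | ⟨-, -, -, hback⟩)
  · exact hback.not_symm hP hdisj (h₁ _ (Walk.mk_mem_darts_project hd hback.adj.ne.symm))
  · exact hback.not_symm hP hdisj (h₂ _ (Walk.mk_mem_darts_project hd hback.adj.ne.symm))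

def interleave {α β : Type*} : List α → List β → List (α × β × Fin 2)
  | a :: a' :: l₁, b :: b' :: l₂ => (a, b, 0) :: (a', b, 1) :: interleave (a' :: l₁) (b' :: l₂)
  | a :: _, b :: _ => [(a, b, 0)]
  | _, _ => []

theorem interleave_eq_map_range {α β : Type*} {n : ℕ} {l₁ : List α} {l₂ : List β} (a : α) (b : β)
    (h₁ : l₁.length = n + 1) (h₂ : l₂.length = n + 1) :
    interleave l₁ l₂ = (List.range (2 * n + 1)).map (fun j =>
      if j % 2 = 0 then (l₁.getD (j / 2) a, l₂.getD (j / 2) b, (0 : Fin 2))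
      else (l₁.getD (j / 2 + 1) a, l₂.getD (j / 2) b, (1 : Fin 2))) := by
  induction n generalizing l₁ l₂ with
  | zero =>
    obtain ⟨a₀, rfl⟩ := List.length_eq_one_iff.mp h₁
    obtain ⟨b₀, rfl⟩ := List.length_eq_one_iff.mp h₂
    rfl
  | succ n ih =>
    obtain ⟨a₀, a₁, l₁, rfl⟩ : ∃ a₀ a₁ l, l₁ = a₀ :: a₁ :: l := by
      match l₁, h₁ with | a₀ :: a₁ :: l, _ => exact ⟨a₀, a₁, l, rfl⟩
    obtain ⟨b₀, b₁, l₂, rfl⟩ : ∃ b₀ b₁ l, l₂ = b₀ :: b₁ :: l := by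
      match l₂, h₂ with | b₀ :: b₁ :: l, _ => exact ⟨b₀, b₁, l, rfl⟩
    rw [interleave, ih (by simpa using h₁) (by simpa using h₂),
      show 2 * (n + 1) + 1 = 2 + (2 * n + 1) by ring, List.range_add (n := 2), List.map_append,
      List.map_map]
    refine congrArg₂ _ rfl (congrArg₂ _ rfl (List.map_congr_left fun j _ => ?_))
    simp [Nat.add_mod_left, show (2 + j) / 2 = j / 2 + 1 by omega]

theorem support_eq_interleave : ∀ {x y : V × V × Fin 2} (w : (productGraph G P ρ).Walk x y),
    x.2.2 = 0 → y.2.2 = 0 → (∀ d ∈ w.darts, IsForwardStep P ρ d.fst d.snd) →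
    w.support = interleave (projFst w).support (projSnd w).support
  | (a, c, i), _, .nil, hx, _, _ => by
    simp only at hx
    subst hx
    rfl
  | _, _, .cons h .nil, hx, hy, hw => by
    rcases hw _ (List.mem_cons_self ..) with ⟨-, h1, -⟩ | ⟨h1, -⟩ <;> simp_all
  | x, _, .cons (v := z) h (.cons (v := z') h' w), hx, hy, hw => by
    classical
    have hstep₁ : IsForwardStep P ρ x z := hw ⟨(x, z), h⟩ (by simp)
    have hstep₂ : IsForwardStep P ρ z z' := hw ⟨(z, z'), h'⟩ (by simp)
    obtain ⟨-, hz, hc, hd₁⟩ : x.2.2 = 0 ∧ z.2.2 = 1 ∧ x.2.1 = z.2.1 ∧ IsPairDart P ρ x.1 z.1 := by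
      rcases hstep₁ with h | ⟨h, -⟩
      · exact h
      · simp_all
    obtain ⟨-, hz', ha, hd₂⟩ :
        z.2.2 = 1 ∧ z'.2.2 = 0 ∧ z.1 = z'.1 ∧ IsPairDart P ρ z.2.1 z'.2.1 := by
      rcases hstep₂ with ⟨h, -⟩ | h
      · simp_all
      · exact h
    have ih := support_eq_interleave w hz' hy fun d hd => hw d (by simp [hd])
    simp only [Walk.support_cons, Walk.support_project_cons, if_neg hd₁.adj.ne, if_pos ha,
      if_pos hc, if_neg hd₂.adj.ne]
    rw [ih, ← (projFst w).cons_tail_support, ← (projSnd w).cons_tail_support, interleave]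
    congr 1
    · ext <;> simp_all
    · congr 1
      ext <;> simp_all

theorem exists_walk_support_eq_interleave {a b c d : V} (r₁ : G.Walk a b) (r₂ : G.Walk c d)
    (hlen : r₁.length = r₂.length) (h₁ : ∀ e ∈ r₁.darts, IsPairDart P ρ e.fst e.snd)
    (h₂ : ∀ e ∈ r₂.darts, IsPairDart P ρ e.fst e.snd) :
    ∃ w : (productGraph G P ρ).Walk (a, c, 0) (b, d, 0),
      w.length = 2 * r₁.length ∧ w.support = interleave r₁.support r₂.support := by
  induction r₁ generalizing c r₂ with
  | nil =>
    cases r₂ with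
    | nil => exact ⟨.nil, rfl, rfl⟩
    | cons => simp at hlen
  | @cons a a' _ ha t₁ ih =>
    cases r₂ with
    | nil => simp at hlen
    | @cons c c' _ hc t₂ =>
      obtain ⟨w, hw_len, hw_supp⟩ := ih t₂ (by simpa using hlen) (fun e he => h₁ e (by simp [he]))
        (fun e he => h₂ e (by simp [he]))
      have step₁ : IsForwardStep P ρ (a, c, 0) (a', c, 1) :=
        Or.inl ⟨rfl, rfl, rfl, h₁ _ (List.mem_cons_self ..)⟩
      have step₂ : IsForwardStep P ρ (a', c, 1) (a', c', 0) :=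
        Or.inr ⟨rfl, rfl, rfl, h₂ _ (List.mem_cons_self ..)⟩
      refine ⟨.cons step₁.adj (.cons step₂.adj w), by simp [hw_len]; ring, ?_⟩
      rw [Walk.support_cons, Walk.support_cons, hw_supp, Walk.support_cons, Walk.support_cons,
        ← t₁.cons_tail_support, ← t₂.cons_tail_support, interleave]

end productGraph

open SimpleGraph productGraph in
theorem alternating_path_is_unique_shortest_general {V : Type*} (G : SimpleGraph V)
    (P : Set (V × V)) (Δ : ℕ) (ρ : ∀ p : V × V, G.Walk p.1 p.2)
    (hpath : ∀ p ∈ P, (ρ p).IsPath)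
    (hlen : ∀ p ∈ P, (ρ p).length = Δ)
    (hdist : ∀ p ∈ P, G.dist p.1 p.2 = Δ)
    (huniq : ∀ p ∈ P, ∀ w : G.Walk p.1 p.2, w.length = Δ → w = ρ p)
    (hdisj : ∀ p ∈ P, ∀ q ∈ P, p ≠ q → ∀ e ∈ (ρ p).edges, e ∉ (ρ q).edges) :
    ∀ p ∈ P, ∀ q ∈ P,
      ∃ w : (productGraph G P ρ).Walk (p.1, q.1, 0) (p.2, q.2, 0),
        w.length = 2 * Δ ∧
        w.support = (List.range (2 * Δ + 1)).map (fun j =>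
          if j % 2 = 0 then
            ((ρ p).support.getD (j / 2) p.1, (ρ q).support.getD (j / 2) q.1, (0 : Fin 2))
          else
            ((ρ p).support.getD (j / 2 + 1) p.1, (ρ q).support.getD (j / 2) q.1, (1 : Fin 2))) ∧
        ∀ w' : (productGraph G P ρ).Walk (p.1, q.1, 0) (p.2, q.2, 0),
          w'.length = 2 * Δ → w' = w := by
  intro p hp q hq
  have hρ : ∀ s ∈ P, ∀ e ∈ (ρ s).darts, IsPairDart P ρ e.fst e.snd :=
    fun s hs e he => ⟨s, hs, e, he, rfl⟩
  obtain ⟨w, hw_len, hw_supp⟩ := exists_walk_support_eq_interleave (ρ p) (ρ q)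
    (by rw [hlen p hp, hlen q hq]) (hρ p hp) (hρ q hq)
  refine ⟨w, by rw [hw_len, hlen p hp], hw_supp.trans (interleave_eq_map_range _ _
    (by simp [hlen p hp]) (by simp [hlen q hq])), fun w' hw' => ?_⟩
  have hsum : (projFst w').length + (projSnd w').length = 2 * Δ :=
    hw' ▸ length_projFst_add_length_projSnd w'
  have hdist₁ : Δ ≤ (projFst w').length := hdist p hp ▸ dist_le _
  have hdist₂ : Δ ≤ (projSnd w').length := hdist q hq ▸ dist_le _
  have h₁ : projFst w' = ρ p := huniq p hp _ (by omega)
  have h₂ : projSnd w' = ρ q := huniq q hq _ (by omega)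
  refine Walk.ext_support ?_
  rw [hw_supp, support_eq_interleave w' rfl rfl, h₁, h₂]
  exact isForwardStep_of_mem_darts (fun s hs => (hpath s hs).isTrail) hdisj
    (h₁ ▸ hρ p hp) (h₂ ▸ hρ q hq)

theorem alternating_path_is_unique_shortest {V : Type*} (G : SimpleGraph V)
    (P : Set (V × V)) (Δ : ℕ) (hΔ : 1 ≤ Δ) (ρ : ∀ p : V × V, G.Walk p.1 p.2)
    (hpath : ∀ p ∈ P, (ρ p).IsPath)
    (hlen : ∀ p ∈ P, (ρ p).length = Δ)
    (hdist : ∀ p ∈ P, G.dist p.1 p.2 = Δ)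
    (huniq : ∀ p ∈ P, ∀ w : G.Walk p.1 p.2, w.length = Δ → w = ρ p)
    (hdisj : ∀ p ∈ P, ∀ q ∈ P, p ≠ q → ∀ e ∈ (ρ p).edges, e ∉ (ρ q).edges) :
    ∀ p ∈ P, ∀ q ∈ P,
      ∃ w : (productGraph G P ρ).Walk (p.1, q.1, 0) (p.2, q.2, 0),
        w.length = 2 * Δ ∧
        w.support = (List.range (2 * Δ + 1)).map (fun j =>
          if j % 2 = 0 then
            ((ρ p).support.getD (j / 2) p.1, (ρ q).support.getD (j / 2) q.1, (0 : Fin 2))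
          else
            ((ρ p).support.getD (j / 2 + 1) p.1, (ρ q).support.getD (j / 2) q.1, (1 : Fin 2))) ∧
        ∀ w' : (productGraph G P ρ).Walk (p.1, q.1, 0) (p.2, q.2, 0),
          w'.length = 2 * Δ → w' = w :=
  alternating_path_is_unique_shortest_general G P Δ ρ hpath hlen hdist huniq hdisj
end

section
/- In the product construction G', for two distinct pairs p' ≠ p'' in P' (where P' consists of pairs {(s₁,s₂,1),(t₁,t₂,1)} for (s₁,t₁),(s₂,t₂) ∈ P), the unique shortest paths ρ(p') and ρ(p'') are 2-path disjoint: they share no subpath consisting of two consecutive edges. -/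
/-!
A walk of length `2Δ` in `G'` from `(s₁, s₂, 0)` to `(t₁, t₂, 0)` projects to walks `s₁ → t₁`
and `s₂ → t₂` in `G` whose lengths add up to `2Δ`; both have length at least `Δ`, so both are
shortest and hence equal to `ρ (s₁, t₁)` and `ρ (s₂, t₂)`. Edge-disjointness then fixes the
direction of every step: moving the first coordinate goes along `ρ (s₁, t₁)` from layer `0` to
layer `1`, moving the second along `ρ (s₂, t₂)` from layer `1` to layer `0`, since a backward
step would put an edge of a path `ρ p` on it in both directions. Of two consecutive steps, one
moves each coordinate, and its edge determines the pair of `P` it comes from; the same 2-path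
traversed backwards would reverse a step.
-/

namespace SimpleGraph.Walk

section
variable {V : Type*} {G : SimpleGraph V}

theorem infix_support_cons_iff {u v x a b : V} (h : G.Adj u v) (w : G.Walk v x) :
    [a, b] <:+: (cons h w).support ↔ (a = u ∧ b = v) ∨ [a, b] <:+: w.support := by
  have hw : [b] <+: w.support ↔ b = v := by cases w <;> simp [eq_comm]
  simp [support_cons, List.infix_cons_iff, List.cons_prefix_cons, hw]

theorem IsTrail.not_infix_support_swap {u v a b : V} {p : G.Walk u v} (hp : p.IsTrail)
    (hab : [a, b] <:+: p.support) : ¬ [b, a] <:+: p.support := by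
  intro hba
  have hadj := adj_of_infix_support hab
  have hmem := (mem_darts_iff_infix_support hadj).2 hab
  have hmem' := (mem_darts_iff_infix_support hadj.symm).2 hba
  have := List.inj_on_of_nodup_map hp.edges_nodup hmem hmem' Sym2.eq_swap
  exact hadj.ne (congrArg (fun d : G.Dart => d.fst) this)

theorem infix_support_of_mem_darts {u v a b : V} {p : G.Walk u v} {d : G.Dart}
    (hd : d ∈ p.darts) (h : d.toProd = (a, b)) : [a, b] <:+: p.support := by
  simpa [h] using mem_darts_iff_fst_snd_infix_support.1 hd

end

theorem exists_boxProd_projections {α β : Type*} {G : SimpleGraph α} {H : SimpleGraph β}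
    {x y : α × β} (w : (G □ H).Walk x y) :
    ∃ (w₁ : G.Walk x.1 y.1) (w₂ : H.Walk x.2 y.2), w₁.length + w₂.length = w.length ∧
      ∀ a b, [a, b] <:+: w.support →
        ([a.1, b.1] <:+: w₁.support ∧ a.2 = b.2) ∨ ([a.2, b.2] <:+: w₂.support ∧ a.1 = b.1) := by
  induction w with
  | nil => exact ⟨nil, nil, rfl, fun a b hab => absurd hab.length_le (by simp)⟩
  | cons h w ih =>
    obtain ⟨w₁, w₂, hlen, hstep⟩ := ih
    rcases boxProd_adj.1 h with ⟨hG, h₂⟩ | ⟨hH, h₁⟩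
    · refine ⟨cons hG w₁, w₂.copy h₂.symm rfl, ?_, fun a b hab => ?_⟩
      · simp only [length_cons, length_copy]; omega
      rcases (infix_support_cons_iff h w).1 hab with ⟨rfl, rfl⟩ | hab
      · exact .inl ⟨(infix_support_cons_iff hG w₁).2 (.inl ⟨rfl, rfl⟩), h₂⟩
      · exact (hstep a b hab).imp
          (fun ⟨h, e⟩ => ⟨(infix_support_cons_iff hG w₁).2 (.inr h), e⟩)
          (fun ⟨h, e⟩ => ⟨by rwa [support_copy], e⟩)
    · refine ⟨w₁.copy h₁.symm rfl, cons hH w₂, ?_, fun a b hab => ?_⟩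
      · simp only [length_cons, length_copy]; omega
      rcases (infix_support_cons_iff h w).1 hab with ⟨rfl, rfl⟩ | hab
      · exact .inr ⟨(infix_support_cons_iff hH w₂).2 (.inl ⟨rfl, rfl⟩), h₁⟩
      · exact (hstep a b hab).imp
          (fun ⟨h, e⟩ => ⟨by rwa [support_copy], e⟩)
          (fun ⟨h, e⟩ => ⟨(infix_support_cons_iff hH w₂).2 (.inr h), e⟩)

end SimpleGraph.Walk

open SimpleGraph Walk

section
variable {V : Type*} {G : SimpleGraph V} {P : Set (V × V)} {ρ : ∀ p : V × V, G.Walk p.1 p.2}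

theorem not_infix_support_swap_of_edge_disjoint (hpath : ∀ p ∈ P, (ρ p).IsPath)
    (hdisj : ∀ p ∈ P, ∀ q ∈ P, ∀ e ∈ (ρ p).edges, e ∈ (ρ q).edges → p = q)
    {p r : V × V} (hp : p ∈ P) (hr : r ∈ P) {a b : V} (hab : [a, b] <:+: (ρ p).support) :
    ¬ [b, a] <:+: (ρ r).support := by
  intro hba
  obtain rfl : r = p := hdisj r hr p hp _ (infix_support_iff_mem_edges.1 (.inr hba))
    (infix_support_iff_mem_edges.1 (.inl hab))
  exact (hpath r hr).isTrail.not_infix_support_swap hab hba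

def productGraph.toBoxProd_s11 : productGraph G P ρ →g G □ G where
  toFun x := (x.1, x.2.1)
  map_rel' {x y} h := by
    rw [productGraph, fromRel_adj] at h
    obtain ⟨-, (⟨-, -, e, _, -, d, hd, h⟩ | ⟨-, -, e, _, -, d, hd, h⟩) |
      (⟨-, -, e, _, -, d, hd, h⟩ | ⟨-, -, e, _, -, d, hd, h⟩)⟩ := h
    · exact boxProd_adj.2 (.inl ⟨adj_of_infix_support (infix_support_of_mem_darts hd h), e⟩)
    · exact boxProd_adj.2 (.inr ⟨adj_of_infix_support (infix_support_of_mem_darts hd h), e⟩)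
    · exact boxProd_adj.2
        (.inl ⟨(adj_of_infix_support (infix_support_of_mem_darts hd h)).symm, e.symm⟩)
    · exact boxProd_adj.2
        (.inr ⟨(adj_of_infix_support (infix_support_of_mem_darts hd h)).symm, e.symm⟩)

theorem productGraph.infix_support_of_length_eq {Δ : ℕ}
    (hdist : ∀ p ∈ P, G.dist p.1 p.2 = Δ)
    (huniq : ∀ p ∈ P, ∀ w : G.Walk p.1 p.2, w.length = Δ → w = ρ p)
    {p q : V × V} (hp : p ∈ P) (hq : q ∈ P)
    (u : (productGraph G P ρ).Walk (p.1, q.1, 0) (p.2, q.2, 0)) (hu : u.length = 2 * Δ)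
    {x y : V × V × Fin 2} (hxy : [x, y] <:+: u.support) :
    ([x.1, y.1] <:+: (ρ p).support ∧ x.2.1 = y.2.1) ∨
      ([x.2.1, y.2.1] <:+: (ρ q).support ∧ x.1 = y.1) := by
  obtain ⟨w₁, w₂, hlen, hsteps⟩ := (u.map productGraph.toBoxProd_s11).exists_boxProd_projections
  have h₁ : Δ ≤ w₁.length := hdist p hp ▸ G.dist_le w₁
  have h₂ : Δ ≤ w₂.length := hdist q hq ▸ G.dist_le w₂
  rw [length_map, hu] at hlen
  have hw₁ : w₁.length = Δ := by omega
  have hw₂ : w₂.length = Δ := by omega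
  obtain rfl := huniq p hp w₁ hw₁
  obtain rfl := huniq q hq w₂ hw₂
  have hxy' : [(x.1, x.2.1), (y.1, y.2.1)] <:+: (u.map productGraph.toBoxProd_s11).support := by
    rw [Walk.support_map]
    exact hxy.map productGraph.toBoxProd_s11
  exact hsteps _ _ hxy'

theorem productGraph.layers_of_adj_of_infix_fst (hpath : ∀ p ∈ P, (ρ p).IsPath)
    (hdisj : ∀ p ∈ P, ∀ q ∈ P, ∀ e ∈ (ρ p).edges, e ∈ (ρ q).edges → p = q)
    {p : V × V} (hp : p ∈ P) {x y : V × V × Fin 2} (hadj : (productGraph G P ρ).Adj x y)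
    (hxy : [x.1, y.1] <:+: (ρ p).support) : x.2.2 = 0 ∧ y.2.2 = 1 := by
  rw [productGraph, fromRel_adj] at hadj
  obtain ⟨-, (⟨h₀, h₁, -⟩ | ⟨-, -, e, -⟩) | (⟨-, -, -, r, hr, d, hd, h⟩ | ⟨-, -, e, -⟩)⟩ := hadj
  · exact ⟨h₀, h₁⟩
  · exact absurd e (adj_of_infix_support hxy).ne
  · exact absurd (infix_support_of_mem_darts hd h)
      (not_infix_support_swap_of_edge_disjoint hpath hdisj hp hr hxy)
  · exact absurd e.symm (adj_of_infix_support hxy).ne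

theorem productGraph.layers_of_adj_of_infix_snd (hpath : ∀ p ∈ P, (ρ p).IsPath)
    (hdisj : ∀ p ∈ P, ∀ q ∈ P, ∀ e ∈ (ρ p).edges, e ∈ (ρ q).edges → p = q)
    {q : V × V} (hq : q ∈ P) {x y : V × V × Fin 2} (hadj : (productGraph G P ρ).Adj x y)
    (hxy : [x.2.1, y.2.1] <:+: (ρ q).support) : x.2.2 = 1 ∧ y.2.2 = 0 := by
  rw [productGraph, fromRel_adj] at hadj
  obtain ⟨-, (⟨-, -, e, -⟩ | ⟨h₁, h₀, -⟩) | (⟨-, -, e, -⟩ | ⟨-, -, -, r, hr, d, hd, h⟩)⟩ := hadj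
  · exact absurd e (adj_of_infix_support hxy).ne
  · exact ⟨h₁, h₀⟩
  · exact absurd e.symm (adj_of_infix_support hxy).ne
  · exact absurd (infix_support_of_mem_darts hd h)
      (not_infix_support_swap_of_edge_disjoint hpath hdisj hq hr hxy)

def IsStepAlong (ρ : ∀ p : V × V, G.Walk p.1 p.2) (p q : V × V) (x y : V × V × Fin 2) : Prop :=
  (x.2.2 = 0 ∧ y.2.2 = 1 ∧ x.2.1 = y.2.1 ∧ [x.1, y.1] <:+: (ρ p).support) ∨
    (x.2.2 = 1 ∧ y.2.2 = 0 ∧ x.1 = y.1 ∧ [x.2.1, y.2.1] <:+: (ρ q).support)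

theorem productGraph.isStepAlong_of_length_eq {Δ : ℕ} (hpath : ∀ p ∈ P, (ρ p).IsPath)
    (hdist : ∀ p ∈ P, G.dist p.1 p.2 = Δ)
    (huniq : ∀ p ∈ P, ∀ w : G.Walk p.1 p.2, w.length = Δ → w = ρ p)
    (hdisj : ∀ p ∈ P, ∀ q ∈ P, ∀ e ∈ (ρ p).edges, e ∈ (ρ q).edges → p = q)
    {p q : V × V} (hp : p ∈ P) (hq : q ∈ P)
    (u : (productGraph G P ρ).Walk (p.1, q.1, 0) (p.2, q.2, 0)) (hu : u.length = 2 * Δ)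
    {x y : V × V × Fin 2} (hxy : [x, y] <:+: u.support) : IsStepAlong ρ p q x y := by
  have hadj := adj_of_infix_support hxy
  rcases infix_support_of_length_eq hdist huniq hp hq u hu hxy with ⟨h, e⟩ | ⟨h, e⟩
  · obtain ⟨x₀, y₁⟩ := layers_of_adj_of_infix_fst hpath hdisj hp hadj h
    exact .inl ⟨x₀, y₁, e, h⟩
  · obtain ⟨x₁, y₀⟩ := layers_of_adj_of_infix_snd hpath hdisj hq hadj h
    exact .inr ⟨x₁, y₀, e, h⟩

theorem IsStepAlong.not_swap {p q p' q' : V × V} {x y : V × V × Fin 2}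
    (h : IsStepAlong ρ p q x y) : ¬ IsStepAlong ρ p' q' y x := by
  rcases h with ⟨-, y₁, -, hxy⟩ | ⟨-, y₀, -, hxy⟩
  · rintro (⟨y₀, -⟩ | ⟨-, -, e, -⟩)
    · exact zero_ne_one (y₀.symm.trans y₁)
    · exact (adj_of_infix_support hxy).ne e.symm
  · rintro (⟨-, -, e, -⟩ | ⟨y₁, -⟩)
    · exact (adj_of_infix_support hxy).ne e.symm
    · exact zero_ne_one (y₀.symm.trans y₁)

theorem IsStepAlong.layers {p q : V × V} {x y : V × V × Fin 2} (h : IsStepAlong ρ p q x y) :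
    (x.2.2 = 0 ∧ y.2.2 = 1) ∨ (x.2.2 = 1 ∧ y.2.2 = 0) :=
  h.imp (fun h => ⟨h.1, h.2.1⟩) (fun h => ⟨h.1, h.2.1⟩)

theorem IsStepAlong.infix_fst {p q : V × V} {x y : V × V × Fin 2} (h : IsStepAlong ρ p q x y)
    (hx : x.2.2 = 0) : [x.1, y.1] <:+: (ρ p).support :=
  (h.resolve_right fun h' => zero_ne_one (hx.symm.trans h'.1)).2.2.2

theorem IsStepAlong.infix_snd {p q : V × V} {x y : V × V × Fin 2} (h : IsStepAlong ρ p q x y)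
    (hx : x.2.2 = 1) : [x.2.1, y.2.1] <:+: (ρ q).support :=
  (h.resolve_left fun h' => zero_ne_one (h'.1.symm.trans hx)).2.2.2

theorem IsStepAlong.eq_of_two_steps
    (hdisj : ∀ p ∈ P, ∀ q ∈ P, ∀ e ∈ (ρ p).edges, e ∈ (ρ q).edges → p = q)
    {p q p' q' : V × V} (hp : p ∈ P) (hq : q ∈ P) (hp' : p' ∈ P) (hq' : q' ∈ P)
    {a b c : V × V × Fin 2} (hab : IsStepAlong ρ p q a b) (hbc : IsStepAlong ρ p q b c)
    (hab' : IsStepAlong ρ p' q' a b) (hbc' : IsStepAlong ρ p' q' b c) : p = p' ∧ q = q' := by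
  have same {r r' : V × V} (hr : r ∈ P) (hr' : r' ∈ P) {u v : V}
      (h : [u, v] <:+: (ρ r).support) (h' : [u, v] <:+: (ρ r').support) : r = r' :=
    hdisj r hr r' hr' _ (infix_support_iff_mem_edges.1 (.inl h))
      (infix_support_iff_mem_edges.1 (.inl h'))
  rcases hab.layers with ⟨a₀, b₁⟩ | ⟨a₁, b₀⟩
  · exact ⟨same hp hp' (hab.infix_fst a₀) (hab'.infix_fst a₀),
      same hq hq' (hbc.infix_snd b₁) (hbc'.infix_snd b₁)⟩
  · exact ⟨same hp hp' (hbc.infix_fst b₀) (hbc'.infix_fst b₀),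
      same hq hq' (hab.infix_snd a₁) (hab'.infix_snd a₁)⟩

end

theorem shortest_paths_two_path_disjoint_general {V : Type*} (G : SimpleGraph V)
    (P : Set (V × V)) (Δ : ℕ) (ρ : ∀ p : V × V, G.Walk p.1 p.2)
    (hpath : ∀ p ∈ P, (ρ p).IsPath)
    (hdist : ∀ p ∈ P, G.dist p.1 p.2 = Δ)
    (huniq : ∀ p ∈ P, ∀ w : G.Walk p.1 p.2, w.length = Δ → w = ρ p)
    (hdisj : ∀ p ∈ P, ∀ q ∈ P, p ≠ q → ∀ e ∈ (ρ p).edges, e ∉ (ρ q).edges) :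
    ∀ p ∈ P, ∀ q ∈ P, ∀ p' ∈ P, ∀ q' ∈ P, (p, q) ≠ (p', q') →
      ∀ (w : (productGraph G P ρ).Walk (p.1, q.1, 0) (p.2, q.2, 0))
        (w' : (productGraph G P ρ).Walk (p'.1, q'.1, 0) (p'.2, q'.2, 0)),
        w.length = 2 * Δ → w'.length = 2 * Δ →
        ¬ ∃ a b c : V × V × Fin 2,
            [a, b, c] <:+: w.support ∧
            ([a, b, c] <:+: w'.support ∨ [c, b, a] <:+: w'.support) := by
  intro p hp q hq p' hp' q' hq' hne w w' hw hw' ⟨a, b, c, habc, habc'⟩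
  have hdisj' : ∀ r ∈ P, ∀ r' ∈ P, ∀ e ∈ (ρ r).edges, e ∈ (ρ r').edges → r = r' :=
    fun r hr r' hr' e he he' => by_contra fun hne => hdisj r hr r' hr' hne e he he'
  have step {r s : V × V} (hr : r ∈ P) (hs : s ∈ P)
      (u : (productGraph G P ρ).Walk (r.1, s.1, 0) (r.2, s.2, 0)) (hu : u.length = 2 * Δ)
      {x y : V × V × Fin 2} (hxy : [x, y] <:+: u.support) : IsStepAlong ρ r s x y :=
    productGraph.isStepAlong_of_length_eq hpath hdist huniq hdisj' hr hs u hu hxy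
  have hab := step hp hq w hw ((List.infix_append [] [a, b] [c]).trans habc)
  have hbc := step hp hq w hw ((List.infix_append [a] [b, c] []).trans habc)
  rcases habc' with habc' | hcba
  · exact hne (Prod.ext_iff.2 (hab.eq_of_two_steps hdisj' hp hq hp' hq' hbc
      (step hp' hq' w' hw' ((List.infix_append [] [a, b] [c]).trans habc'))
      (step hp' hq' w' hw' ((List.infix_append [a] [b, c] []).trans habc'))))
  · exact hab.not_swap (step hp' hq' w' hw' ((List.infix_append [c] [b, a] []).trans hcba))

theorem shortest_paths_two_path_disjoint {V : Type*} (G : SimpleGraph V)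
    (P : Set (V × V)) (Δ : ℕ) (hΔ : 1 ≤ Δ) (ρ : ∀ p : V × V, G.Walk p.1 p.2)
    (hpath : ∀ p ∈ P, (ρ p).IsPath)
    (hlen : ∀ p ∈ P, (ρ p).length = Δ)
    (hdist : ∀ p ∈ P, G.dist p.1 p.2 = Δ)
    (huniq : ∀ p ∈ P, ∀ w : G.Walk p.1 p.2, w.length = Δ → w = ρ p)
    (hdisj : ∀ p ∈ P, ∀ q ∈ P, p ≠ q → ∀ e ∈ (ρ p).edges, e ∉ (ρ q).edges) :
    ∀ p ∈ P, ∀ q ∈ P, ∀ p' ∈ P, ∀ q' ∈ P, (p, q) ≠ (p', q') →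
      ∀ (w : (productGraph G P ρ).Walk (p.1, q.1, 0) (p.2, q.2, 0))
        (w' : (productGraph G P ρ).Walk (p'.1, q'.1, 0) (p'.2, q'.2, 0)),
        w.length = 2 * Δ → w'.length = 2 * Δ →
        ¬ ∃ a b c : V × V × Fin 2,
            [a, b, c] <:+: w.support ∧
            ([a, b, c] <:+: w'.support ∨ [c, b, a] <:+: w'.support) :=
  shortest_paths_two_path_disjoint_general G P Δ ρ hpath hdist huniq hdisj
end

section
/- Let G be a graph, P a family of vertex pairs, and suppose for each p ∈ P there is a designated edge set C_p ⊆ E(G) such that: (i) the sets {C_p} are pairwise disjoint, (ii) for each p = {s,t}, every (s,t)-path in G of length at most D + k uses at least one edge of C_p, and (iii) removing all edges in C_p for p ∈ T (any T ⊆ P) leaves distance at most D between the endpoints of every pair not in T. Then the 2^{|P|} subgraphs G_T = G − ∪_{p∈T} C_p are pairwise distinguishable: for T ≠ T', there is a pair {s,t} ∈ P with |dist_{G_T}(s,t) − dist_{G_{T'}}(s,t)| > k. -/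
/-!
If `p ∈ T \ T'`, then deleting `⋃ q ∈ T, C q` removes an edge from every short `p`-walk, so
`p` is more than `D + k` apart in `G_T`, while hypothesis (iii) keeps it within `D` in `G_{T'}`.
-/

namespace SimpleGraph

variable {V : Type*} {G : SimpleGraph V} {u v : V}

theorem lt_edist_deleteEdges {S : Set (Sym2 V)} {n : ℕ}
    (hhit : ∀ w : G.Walk u v, w.length ≤ n → ∃ e ∈ S, e ∈ w.edges) :
    (n : ℕ∞) < (G.deleteEdges S).edist u v := by
  by_contra! hle
  obtain ⟨w, hw⟩ :=
    exists_walk_of_edist_ne_top (ne_top_of_le_ne_top (ENat.natCast_ne_top n) hle)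
  obtain ⟨e, heS, hew⟩ := hhit (w.mapLe (G.deleteEdges_le S))
    (by rw [Walk.length_mapLe]; exact_mod_cast hw ▸ hle)
  rw [Walk.edges_mapLe_eq_edges] at hew
  have hedge := w.edges_subset_edgeSet hew
  rw [edgeSet_deleteEdges] at hedge
  exact hedge.2 heS

end SimpleGraph

theorem lt_max_tsub_min_of_le_of_lt {α : Type*} [AddCommMonoid α] [LinearOrder α]
    [IsOrderedAddMonoid α] [Sub α] [OrderedSub α] {a b d k : α}
    (ha : a ≤ d) (hb : d + k < b) : k < max a b - min a b := by
  rw [lt_tsub_iff_left]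
  calc min a b + k ≤ d + k := by gcongr; exact min_le_of_left_le ha
    _ < b := hb
    _ ≤ max a b := le_max_right a b

theorem lt_max_tsub_min_of_lt_of_le {α : Type*} [AddCommMonoid α] [LinearOrder α]
    [IsOrderedAddMonoid α] [Sub α] [OrderedSub α] {a b d k : α}
    (ha : d + k < a) (hb : b ≤ d) : k < max a b - min a b := by
  rw [max_comm, min_comm]
  exact lt_max_tsub_min_of_le_of_lt hb ha

theorem deleted_subgraphs_distinguishable_general {V : Type*} (G : SimpleGraph V)
    (P : Finset (V × V)) (C : V × V → Set (Sym2 V)) (D k : ℕ)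
    (hhit : ∀ p ∈ P, ∀ w : G.Walk p.1 p.2, w.length ≤ D + k → ∃ e ∈ C p, e ∈ w.edges)
    (hpres : ∀ T ⊆ (P : Set (V × V)), ∀ p ∈ P, p ∉ T →
      ∃ w : (G.deleteEdges (⋃ q ∈ T, C q)).Walk p.1 p.2, w.length ≤ D) :
    ∀ T ⊆ (P : Set (V × V)), ∀ T' ⊆ (P : Set (V × V)), T ≠ T' →
      ∃ p ∈ P,
        (k : ℕ∞) <
          max ((G.deleteEdges (⋃ q ∈ T, C q)).edist p.1 p.2)
              ((G.deleteEdges (⋃ q ∈ T', C q)).edist p.1 p.2) -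
          min ((G.deleteEdges (⋃ q ∈ T, C q)).edist p.1 p.2)
              ((G.deleteEdges (⋃ q ∈ T', C q)).edist p.1 p.2) := by
  have far : ∀ S ⊆ (P : Set (V × V)), ∀ p ∈ S,
      (D + k : ℕ∞) < (G.deleteEdges (⋃ q ∈ S, C q)).edist p.1 p.2 := fun S hS p hp => by
    have hlt := SimpleGraph.lt_edist_deleteEdges (n := D + k) fun w hw =>
      let ⟨e, he, hew⟩ := hhit p (hS hp) w hw
      ⟨e, Set.mem_biUnion hp he, hew⟩
    exact_mod_cast hlt
  have near : ∀ S ⊆ (P : Set (V × V)), ∀ p ∈ P, p ∉ S →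
      (G.deleteEdges (⋃ q ∈ S, C q)).edist p.1 p.2 ≤ D := fun S hS p hp hpS => by
    obtain ⟨w, hw⟩ := hpres S hS p hp hpS
    exact w.edist_le.trans (by exact_mod_cast hw)
  intro T hT T' hT' hne
  obtain ⟨p, ⟨hpT, hpT'⟩ | ⟨hpT', hpT⟩⟩ := Set.symmDiff_nonempty.mpr hne
  · exact ⟨p, hT hpT,
      lt_max_tsub_min_of_lt_of_le (far T hT p hpT) (near T' hT' p (hT hpT) hpT')⟩
  · exact ⟨p, hT' hpT',
      lt_max_tsub_min_of_le_of_lt (near T hT p (hT' hpT') hpT) (far T' hT' p hpT')⟩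

/-- The `2^{|P|}` subgraphs `G_T = G - ⋃_{p ∈ T} C_p` are pairwise distinguishable by some
pairwise distance (distances measured in `ℕ∞` via `SimpleGraph.edist`). -/
theorem deleted_subgraphs_distinguishable {V : Type*} (G : SimpleGraph V)
    (P : Finset (V × V)) (C : V × V → Set (Sym2 V)) (D k : ℕ)
    (hsub : ∀ p ∈ P, C p ⊆ G.edgeSet)
    (hdisj : ∀ p ∈ P, ∀ q ∈ P, p ≠ q → Disjoint (C p) (C q))
    (hhit : ∀ p ∈ P, ∀ w : G.Walk p.1 p.2, w.length ≤ D + k → ∃ e ∈ C p, e ∈ w.edges)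
    (hpres : ∀ T ⊆ (P : Set (V × V)), ∀ p ∈ P, p ∉ T →
      ∃ w : (G.deleteEdges (⋃ q ∈ T, C q)).Walk p.1 p.2, w.length ≤ D) :
    ∀ T ⊆ (P : Set (V × V)), ∀ T' ⊆ (P : Set (V × V)), T ≠ T' →
      ∃ p ∈ P,
        (k : ℕ∞) <
          max ((G.deleteEdges (⋃ q ∈ T, C q)).edist p.1 p.2)
              ((G.deleteEdges (⋃ q ∈ T', C q)).edist p.1 p.2) -
          min ((G.deleteEdges (⋃ q ∈ T, C q)).edist p.1 p.2)
              ((G.deleteEdges (⋃ q ∈ T', C q)).edist p.1 p.2) :=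
  deleted_subgraphs_distinguishable_general G P C D k hhit hpres
end
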